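/- Let n be a natural number with 2 ≤ n. If α and β are ordinals with α < ω_{n+1} and β < ω_n, then (α^ω)^{⊙β} < ω_{n+1}, where (α^ω)^{⊙β} is the β-fold iterated Hessenberg product of α^ω. -/

import Mathlib

universe u

namespace Ordinal

open Order Set

/-- Natural (Hessenberg) addition of ordinals, as formerly in Mathlib's
`Mathlib.SetTheory.Ordinal.NaturalOps` (since removed from Mathlib). -/
noncomputable def nadd (a b : Ordinal.{u}) : Ordinal.{u} :=
  max (⨆ x : Iio a, succ (nadd x.1 b)) (⨆ x : Iio b, succ (nadd a x.1))
termination_by (a, b)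
decreasing_by all_goals cases x; decreasing_tactic

/-- Natural (Hessenberg) multiplication of ordinals, as formerly in Mathlib's
`Mathlib.SetTheory.Ordinal.NaturalOps` (since removed from Mathlib). -/
noncomputable def nmul (a b : Ordinal.{u}) : Ordinal.{u} :=
  sInf {c | ∀ a' < a, ∀ b' < b, nadd (nmul a' b) (nmul a b') < nadd c (nmul a' b')}
termination_by (a, b)

end Ordinal

/-- The `β`-fold iterated Hessenberg (natural) product of `α`:
`α^{⊙0} = 1`, `α^{⊙(β+1)} = α^{⊙β} ⊙ α`, and
`α^{⊙λ} = sup_{β<λ} α^{⊙β}` for `λ` a limit ordinal. -/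
noncomputable def iterNmul (α β : Ordinal) : Ordinal :=
  Ordinal.limitRecOn β 1 (fun _ ih => Ordinal.nmul ih α)
    (fun b _ ih => ⨆ γ : Set.Iio b, ih γ.1 γ.2)

/-- The tower of ordinals `ω_0 = 1`, `ω_{n+1} = ω^{ω_n}`. -/
noncomputable def omegaTower : ℕ → Ordinal
  | 0 => 1
  | n + 1 => Ordinal.omega0 ^ omegaTower n

/-!
If `x ≤ ω ^ ω ^ k`, then `x^{⊙b} ≤ ω ^ (ω ^ k * b)` for every `b`, by induction on `b`: the
successor step combines `ω ^ s ⊙ ω ^ ω ^ k ≤ ω ^ (s ♯ ω ^ k)` with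
`ω ^ k * b ♯ ω ^ k = ω ^ k * (b + 1)`. Both rest on every `ω ^ γ` being closed under `♯`, which
follows by writing the ordinals below `ω ^ γ` as `ω ^ c * q + r` with `r < ω ^ c` and `c < γ`.
For `n = m + 2`, `α < ω_{n+1}` yields `k < ω_{n-1}` with `α ^ ω ≤ ω ^ ω ^ (k + 1)`, and
`ω ^ (k + 1) * β < ω_n` because `ω_n = ω ^ ω ^ ω_m` is closed under ordinal multiplication.
-/

universe v w

infixl:65 " ♯ " => Ordinal.nadd
infixl:70 " ⨳ " => Ordinal.nmul

namespace Ordinal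

open Order Set

variable {a b c d : Ordinal.{u}}

theorem lt_nadd_iff :
    a < b ♯ c ↔ (∃ b' < b, a ≤ b' ♯ c) ∨ ∃ c' < c, a ≤ b ♯ c' := by
  rw [nadd]
  simp [Ordinal.lt_iSup_iff]

theorem nadd_le_iff :
    b ♯ c ≤ a ↔ (∀ b' < b, b' ♯ c < a) ∧ ∀ c' < c, b ♯ c' < a := by
  rw [← not_lt, lt_nadd_iff]
  simp

theorem nadd_lt_nadd_left (h : b < c) (a : Ordinal.{u}) : a ♯ b < a ♯ c :=
  lt_nadd_iff.2 (Or.inr ⟨b, h, le_rfl⟩)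

theorem nadd_lt_nadd_right (h : b < c) (a : Ordinal.{u}) : b ♯ a < c ♯ a :=
  lt_nadd_iff.2 (Or.inl ⟨b, h, le_rfl⟩)

theorem nadd_le_nadd_left (h : b ≤ c) (a : Ordinal.{u}) : a ♯ b ≤ a ♯ c := by
  rcases h.lt_or_eq with h | rfl
  exacts [(nadd_lt_nadd_left h a).le, le_rfl]

theorem nadd_le_nadd_right (h : b ≤ c) (a : Ordinal.{u}) : b ♯ a ≤ c ♯ a := by
  rcases h.lt_or_eq with h | rfl
  exacts [(nadd_lt_nadd_right h a).le, le_rfl]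

theorem nadd_lt_nadd (hab : a < b) (hcd : c < d) : a ♯ c < b ♯ d :=
  (nadd_lt_nadd_left hcd a).trans (nadd_lt_nadd_right hab d)

theorem nadd_lt_nadd_of_le_of_lt (hab : a ≤ b) (hcd : c < d) : a ♯ c < b ♯ d :=
  (nadd_lt_nadd_left hcd a).trans_le (nadd_le_nadd_right hab d)

theorem nadd_le_nadd (hab : a ≤ b) (hcd : c ≤ d) : a ♯ c ≤ b ♯ d :=
  (nadd_le_nadd_left hcd a).trans (nadd_le_nadd_right hab d)

theorem nadd_lt_nadd_iff_right (a : Ordinal.{u}) : b ♯ a < c ♯ a ↔ b < c :=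
  (show StrictMono (· ♯ a) from fun _ _ h ↦ nadd_lt_nadd_right h a).lt_iff_lt

theorem nadd_comm (a b : Ordinal.{u}) : a ♯ b = b ♯ a := by
  induction a using WellFoundedLT.induction generalizing b with | _ a iha
  induction b using WellFoundedLT.induction with | _ b ihb
  rw [nadd, max_comm]
  conv_rhs => rw [nadd]
  congr 1 <;> congr 1 <;> funext x
  exacts [by rw [ihb x.1 x.2], by rw [iha x.1 x.2]]

@[simp] theorem nadd_zero (a : Ordinal.{u}) : a ♯ 0 = a := by
  induction a using WellFoundedLT.induction with | _ a ih
  refine le_antisymm (nadd_le_iff.2 ⟨fun b hb ↦ (ih b hb).trans_lt hb, by simp⟩)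
    (le_of_forall_lt fun b hb ↦ ?_)
  rw [← ih b hb]
  exact nadd_lt_nadd_right hb 0

@[simp] theorem zero_nadd (a : Ordinal.{u}) : 0 ♯ a = a := by
  rw [nadd_comm, nadd_zero]

theorem le_self_nadd : a ≤ a ♯ b :=
  (nadd_zero a).symm.trans_le (nadd_le_nadd_left zero_le a)

theorem nadd_assoc (a b c : Ordinal.{u}) : a ♯ b ♯ c = a ♯ (b ♯ c) := by
  induction a using WellFoundedLT.induction generalizing b c with | _ a iha
  induction b using WellFoundedLT.induction generalizing c with | _ b ihb
  induction c using WellFoundedLT.induction with | _ c ihc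
  apply le_antisymm
  · refine nadd_le_iff.2 ⟨fun d hd ↦ ?_, fun c' hc' ↦ ?_⟩
    · rcases lt_nadd_iff.1 hd with ⟨a', ha', hd⟩ | ⟨b', hb', hd⟩
      · calc d ♯ c ≤ a' ♯ b ♯ c := nadd_le_nadd_right hd c
          _ = a' ♯ (b ♯ c) := iha a' ha' b c
          _ < a ♯ (b ♯ c) := nadd_lt_nadd_right ha' _
      · calc d ♯ c ≤ a ♯ b' ♯ c := nadd_le_nadd_right hd c
          _ = a ♯ (b' ♯ c) := ihb b' hb' c
          _ < a ♯ (b ♯ c) := nadd_lt_nadd_left (nadd_lt_nadd_right hb' c) a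
    · rw [ihc c' hc']
      exact nadd_lt_nadd_left (nadd_lt_nadd_left hc' b) a
  · refine nadd_le_iff.2 ⟨fun a' ha' ↦ ?_, fun d hd ↦ ?_⟩
    · rw [← iha a' ha' b c]
      exact nadd_lt_nadd_right (nadd_lt_nadd_right ha' b) c
    · rcases lt_nadd_iff.1 hd with ⟨b', hb', hd⟩ | ⟨c', hc', hd⟩
      · calc a ♯ d ≤ a ♯ (b' ♯ c) := nadd_le_nadd_left hd a
          _ = a ♯ b' ♯ c := (ihb b' hb' c).symm
          _ < a ♯ b ♯ c := nadd_lt_nadd_right (nadd_lt_nadd_left hb' a) c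
      · calc a ♯ d ≤ a ♯ (b ♯ c') := nadd_le_nadd_left hd a
          _ = a ♯ b ♯ c' := (ihc c' hc').symm
          _ < a ♯ b ♯ c := nadd_lt_nadd_left hc' _

instance : Std.Associative (α := Ordinal.{u}) nadd := ⟨nadd_assoc⟩

instance : Std.Commutative (α := Ordinal.{u}) nadd := ⟨nadd_comm⟩

theorem add_le_nadd (a b : Ordinal.{u}) : a + b ≤ a ♯ b := by
  induction b using limitRecOn with
  | zero => simp
  | add_one b ih =>
    rw [← add_assoc, ← succ_eq_add_one, succ_le_iff]
    exact ih.trans_lt (nadd_lt_nadd_left (lt_add_one b) a)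
  | limit b hb ih =>
    exact (add_le_iff_of_isSuccLimit hb).2 fun b' hb' ↦
      (ih b' hb').trans (nadd_le_nadd_left hb'.le a)

theorem nmul_nadd_lt {a' b' : Ordinal.{u}} (ha : a' < a) (hb : b' < b) :
    a' ⨳ b ♯ a ⨳ b' < a ⨳ b ♯ a' ⨳ b' := by
  have hne : {c | ∀ a' < a, ∀ b' < b, a' ⨳ b ♯ a ⨳ b' < c ♯ a' ⨳ b'}.Nonempty :=
    ⟨⨆ p : Iio a × Iio b, succ (p.1.1 ⨳ b ♯ a ⨳ p.2.1), fun a' ha' b' hb' ↦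
      (lt_succ _).trans_le <| (Ordinal.le_iSup (fun p : Iio a × Iio b ↦
        succ (p.1.1 ⨳ b ♯ a ⨳ p.2.1)) (⟨a', ha'⟩, ⟨b', hb'⟩)).trans le_self_nadd⟩
  rw [nmul.eq_1 a b]
  exact csInf_mem hne a' ha b' hb

theorem nmul_le_iff :
    a ⨳ b ≤ c ↔ ∀ a' < a, ∀ b' < b, a' ⨳ b ♯ a ⨳ b' < c ♯ a' ⨳ b' := by
  refine ⟨fun h a' ha b' hb ↦ (nmul_nadd_lt ha hb).trans_le (nadd_le_nadd_right h _),
    fun H ↦ ?_⟩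
  rw [nmul.eq_1 a b]
  exact csInf_le' H

theorem lt_nmul_iff :
    c < a ⨳ b ↔ ∃ a' < a, ∃ b' < b, c ♯ a' ⨳ b' ≤ a' ⨳ b ♯ a ⨳ b' := by
  refine ⟨fun h ↦ ?_, fun ⟨a', ha, b', hb, h⟩ ↦ ?_⟩
  · by_contra! H
    exact h.not_ge (nmul_le_iff.2 H)
  · exact (nadd_lt_nadd_iff_right (a' ⨳ b')).1 (h.trans_lt (nmul_nadd_lt ha hb))

theorem nmul_comm (a b : Ordinal.{u}) : a ⨳ b = b ⨳ a := by
  induction a using WellFoundedLT.induction generalizing b with | _ a iha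
  induction b using WellFoundedLT.induction with | _ b ihb
  refine le_antisymm (nmul_le_iff.2 fun a' ha b' hb ↦ ?_) (nmul_le_iff.2 fun b' hb a' ha ↦ ?_)
  · rw [iha a' ha b, ihb b' hb, iha a' ha b', nadd_comm (b ⨳ a')]
    exact nmul_nadd_lt hb ha
  · rw [← ihb b' hb, ← iha a' ha b, ← iha a' ha b', nadd_comm (a ⨳ b')]
    exact nmul_nadd_lt ha hb

@[simp] theorem nmul_zero (a : Ordinal.{u}) : a ⨳ 0 = 0 :=
  nonpos_iff_eq_zero.1 (nmul_le_iff.2 fun _ _ _ hb ↦ (not_lt_zero hb).elim)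

@[simp] theorem zero_nmul (a : Ordinal.{u}) : 0 ⨳ a = 0 := by
  rw [nmul_comm, nmul_zero]

theorem nmul_lt_nmul_of_pos_left (h : a < b) (hc : 0 < c) : c ⨳ a < c ⨳ b :=
  lt_nmul_iff.2 ⟨0, hc, a, h, by simp⟩

theorem nmul_le_nmul_left (h : a ≤ b) (c : Ordinal.{u}) : c ⨳ a ≤ c ⨳ b := by
  rcases h.lt_or_eq with h | rfl
  · rcases eq_zero_or_pos c with rfl | hc
    · simp
    · exact (nmul_lt_nmul_of_pos_left h hc).le
  · exact le_rfl

theorem nmul_le_nmul_right (h : a ≤ b) (c : Ordinal.{u}) : a ⨳ c ≤ b ⨳ c := by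
  rw [nmul_comm, nmul_comm b]
  exact nmul_le_nmul_left h c

theorem nmul_le_nmul (hab : a ≤ b) (hcd : c ≤ d) : a ⨳ c ≤ b ⨳ d :=
  (nmul_le_nmul_left hcd a).trans (nmul_le_nmul_right hab d)

theorem nmul_nadd_le {a' b' : Ordinal.{u}} (ha : a' ≤ a) (hb : b' ≤ b) :
    a' ⨳ b ♯ a ⨳ b' ≤ a ⨳ b ♯ a' ⨳ b' := by
  rcases ha.lt_or_eq with ha | rfl
  · rcases hb.lt_or_eq with hb | rfl
    · exact (nmul_nadd_lt ha hb).le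
    · rw [nadd_comm]
  · exact le_rfl

theorem lt_of_nadd_lt_nadd_of_eq {x y l r k : Ordinal.{u}} (h : x < y) (hx : x = l ♯ k)
    (hy : y = r ♯ k) : l < r :=
  (nadd_lt_nadd_iff_right k).1 (hx ▸ hy ▸ h)

theorem nmul_nadd (a b c : Ordinal.{u}) : a ⨳ (b ♯ c) = a ⨳ b ♯ a ⨳ c := by
  induction a using WellFoundedLT.induction generalizing b c with | _ a iha
  induction b using WellFoundedLT.induction generalizing c with | _ b ihb
  induction c using WellFoundedLT.induction with | _ c ihc
  apply le_antisymm
  · refine nmul_le_iff.2 fun a' ha d hd ↦ ?_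
    rw [iha a' ha b c]
    rcases lt_nadd_iff.1 hd with ⟨b', hb, hd⟩ | ⟨c', hc, hd⟩
    · have h := nadd_lt_nadd_of_le_of_lt (nmul_nadd_le ha.le hd) (nmul_nadd_lt ha hb)
      rw [iha a' ha b' c, ihb b' hb c] at h
      exact lt_of_nadd_lt_nadd_of_eq h (k := a' ⨳ b' ♯ a ⨳ b') (by ac_rfl) (by ac_rfl)
    · have h := nadd_lt_nadd_of_le_of_lt (nmul_nadd_le ha.le hd) (nmul_nadd_lt ha hc)
      rw [iha a' ha b c', ihc c' hc] at h
      exact lt_of_nadd_lt_nadd_of_eq h (k := a' ⨳ c' ♯ a ⨳ c') (by ac_rfl) (by ac_rfl)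
  · refine nadd_le_iff.2 ⟨fun d hd ↦ ?_, fun d hd ↦ ?_⟩
    · obtain ⟨a', ha, b', hb, hd⟩ := lt_nmul_iff.1 hd
      have h := nadd_lt_nadd_of_le_of_lt hd (nmul_nadd_lt ha (nadd_lt_nadd_right hb c))
      rw [iha a' ha b c, ihb b' hb c, iha a' ha b' c] at h
      exact lt_of_nadd_lt_nadd_of_eq h (k := a' ⨳ b' ♯ a' ⨳ b ♯ a' ⨳ c ♯ a ⨳ b')
        (by ac_rfl) (by ac_rfl)
    · obtain ⟨a', ha, c', hc, hd⟩ := lt_nmul_iff.1 hd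
      have h := nadd_lt_nadd_of_le_of_lt hd (nmul_nadd_lt ha (nadd_lt_nadd_left hc b))
      rw [iha a' ha b c, ihc c' hc, iha a' ha b c'] at h
      exact lt_of_nadd_lt_nadd_of_eq h (k := a' ⨳ c' ♯ a' ⨳ b ♯ a' ⨳ c ♯ a ⨳ c')
        (by ac_rfl) (by ac_rfl)

theorem nadd_nmul (a b c : Ordinal.{u}) : (a ♯ b) ⨳ c = a ⨳ c ♯ b ⨳ c := by
  rw [nmul_comm, nmul_nadd, nmul_comm c a, nmul_comm c b]

theorem omega0_opow_mul_nadd_of_lt (hc : IsPrincipal (· ♯ ·) (ω ^ c)) (q : Ordinal.{u})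
    {r : Ordinal.{u}} (hr : r < ω ^ c) : ω ^ c * q ♯ r = ω ^ c * q + r := by
  have hω : ω ^ c ≠ 0 := opow_ne_zero c omega0_ne_zero
  induction q using WellFoundedLT.induction generalizing r with | _ q ihq
  induction r using WellFoundedLT.induction with | _ r ihr
  refine le_antisymm (nadd_le_iff.2 ⟨fun x hx ↦ ?_, fun r' hr' ↦ ?_⟩) (add_le_nadd _ _)
  · have hq : x / ω ^ c < q := (lt_mul_iff_div_lt hω).1 hx
    have hs : x % ω ^ c < ω ^ c := mod_lt x hω
    calc x ♯ r = ω ^ c * (x / ω ^ c) ♯ (x % ω ^ c ♯ r) := by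
          rw [← nadd_assoc, ihq _ hq hs, div_add_mod]
      _ = ω ^ c * (x / ω ^ c) + (x % ω ^ c ♯ r) := ihq _ hq (hc hs hr)
      _ < ω ^ c * succ (x / ω ^ c) := by
          rw [mul_succ]
          exact add_lt_add_right (hc hs hr) _
      _ ≤ ω ^ c * q + r := (mul_le_mul_right (succ_le_of_lt hq) _).trans le_self_add
  · rw [ihr r' hr' (hr'.trans hr)]
    exact add_lt_add_right hr' _

theorem omega0_opow_mul_nadd_omega0_opow (hc : IsPrincipal (· ♯ ·) (ω ^ c)) (q : Ordinal.{u}) :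
    ω ^ c * q ♯ ω ^ c = ω ^ c * succ q := by
  have hω : ω ^ c ≠ 0 := opow_ne_zero c omega0_ne_zero
  induction q using WellFoundedLT.induction with | _ q ih
  refine le_antisymm (nadd_le_iff.2 ⟨fun x hx ↦ ?_, fun y hy ↦ ?_⟩) ?_
  · have hq : x / ω ^ c < q := (lt_mul_iff_div_lt hω).1 hx
    have hs : x % ω ^ c < ω ^ c := mod_lt x hω
    calc x ♯ ω ^ c = ω ^ c * (x / ω ^ c) ♯ ω ^ c ♯ x % ω ^ c := by
          rw [nadd_assoc, nadd_comm (ω ^ c), ← nadd_assoc, omega0_opow_mul_nadd_of_lt hc _ hs,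
            div_add_mod]
      _ = ω ^ c * succ (x / ω ^ c) + x % ω ^ c := by
          rw [ih _ hq, omega0_opow_mul_nadd_of_lt hc _ hs]
      _ < ω ^ c * succ (succ (x / ω ^ c)) := by
          rw [mul_succ (ω ^ c) (succ _)]
          exact add_lt_add_right hs _
      _ ≤ ω ^ c * succ q := mul_le_mul_right (succ_le_succ (succ_le_of_lt hq)) _
  · rw [omega0_opow_mul_nadd_of_lt hc _ hy, mul_succ]
    exact add_lt_add_right hy _
  · rw [mul_succ]
    exact add_le_nadd _ _

theorem omega0_opow_mul_nadd_omega0_opow_mul_natCast (hc : IsPrincipal (· ♯ ·) (ω ^ c))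
    (q : Ordinal.{u}) (k : ℕ) : ω ^ c * q ♯ ω ^ c * k = ω ^ c * (q + k) := by
  induction k with
  | zero => simp
  | succ k ih =>
    rw [Nat.cast_add_one, ← succ_eq_add_one, ← omega0_opow_mul_nadd_omega0_opow hc,
      ← nadd_assoc, ih, omega0_opow_mul_nadd_omega0_opow hc, succ_eq_add_one,
      succ_eq_add_one, add_assoc]

theorem isPrincipal_nadd_omega0_opow (γ : Ordinal.{u}) : IsPrincipal (· ♯ ·) (ω ^ γ) := by
  induction γ using WellFoundedLT.induction with | _ γ ih
  intro a b ha hb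
  rcases eq_or_ne γ 0 with rfl | hγ
  · simp_all
  obtain ⟨c₁, hc₁, m₁, ha⟩ := (lt_omega0_opow hγ).1 ha
  obtain ⟨c₂, hc₂, m₂, hb⟩ := (lt_omega0_opow hγ).1 hb
  set C := max c₁ c₂
  set M := max m₁ m₂
  have hC : C < γ := max_lt hc₁ hc₂
  have hle {c' : Ordinal.{u}} {m' : ℕ} (hc' : c' ≤ C) (hm' : m' ≤ M) :
      ω ^ c' * m' ≤ ω ^ C * M :=
    mul_le_mul' (opow_le_opow_right omega0_pos hc') (Nat.cast_le.2 hm')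
  calc a ♯ b < ω ^ C * M ♯ ω ^ C * M :=
        nadd_lt_nadd (ha.trans_le (hle (le_max_left _ _) (le_max_left _ _)))
          (hb.trans_le (hle (le_max_right _ _) (le_max_right _ _)))
    _ = ω ^ C * (M + M : ℕ) := by
        rw [omega0_opow_mul_nadd_omega0_opow_mul_natCast (ih _ hC), Nat.cast_add]
    _ < ω ^ γ := opow_mul_lt_opow (natCast_lt_omega0 _) hC

theorem omega0_opow_mul_natCast_nmul_le {e y : Ordinal.{u}} (h : ω ^ c ⨳ y ≤ ω ^ e)
    (m : ℕ) :
    (ω ^ c * m) ⨳ y ≤ ω ^ e * m := by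
  induction m with
  | zero => simp
  | succ m ih =>
    rw [Nat.cast_add_one, ← succ_eq_add_one,
      ← omega0_opow_mul_nadd_omega0_opow (isPrincipal_nadd_omega0_opow c),
      ← omega0_opow_mul_nadd_omega0_opow (isPrincipal_nadd_omega0_opow e), nadd_nmul]
    exact nadd_le_nadd ih h

theorem nmul_lt_omega0_opow_nadd {y : Ordinal.{u}}
    (h : ∀ c' < c, ω ^ c' ⨳ y ≤ ω ^ (c' ♯ d)) (ha : a < ω ^ c) :
    a ⨳ y < ω ^ (c ♯ d) := by
  rcases eq_or_ne c 0 with rfl | hc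
  · simp_all [opow_pos]
  obtain ⟨c', hc', m, ha⟩ := (lt_omega0_opow hc).1 ha
  calc a ⨳ y ≤ (ω ^ c' * m) ⨳ y := nmul_le_nmul_right ha.le y
    _ ≤ ω ^ (c' ♯ d) * m := omega0_opow_mul_natCast_nmul_le (h c' hc') m
    _ < ω ^ (c ♯ d) := opow_mul_lt_opow (natCast_lt_omega0 m) (nadd_lt_nadd_right hc' d)

theorem omega0_opow_nmul_omega0_opow_le (c d : Ordinal.{u}) :
    ω ^ c ⨳ ω ^ d ≤ ω ^ (c ♯ d) := by
  induction c using WellFoundedLT.induction generalizing d with | _ c ihc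
  induction d using WellFoundedLT.induction with | _ d ihd
  refine nmul_le_iff.2 fun a ha b hb ↦
    (isPrincipal_nadd_omega0_opow _ ?_ ?_).trans_le le_self_nadd
  · exact nmul_lt_omega0_opow_nadd (fun c' hc' ↦ ihc c' hc' d) ha
  · rw [nmul_comm, nadd_comm]
    refine nmul_lt_omega0_opow_nadd (fun d' hd' ↦ ?_) hb
    rw [nmul_comm, nadd_comm]
    exact ihd d' hd'

end Ordinal

open Ordinal Order Set

theorem iterNmul_zero (x : Ordinal.{u}) : iterNmul x (0 : Ordinal.{v}) = 1 :=
  limitRecOn_zero ..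

theorem iterNmul_add_one (x : Ordinal.{u}) (b : Ordinal.{v}) :
    iterNmul x (b + 1) = iterNmul x b ⨳ x :=
  limitRecOn_add_one ..

theorem iterNmul_of_isSuccLimit (x : Ordinal.{u}) {l : Ordinal.{v}} (hl : IsSuccLimit l) :
    iterNmul x l = ⨆ γ : Iio l, iterNmul x γ.1 :=
  limitRecOn_limit _ _ _ _ hl

theorem iterNmul_lift (x : Ordinal.{u}) (b : Ordinal.{v}) :
    iterNmul x (lift.{w} b) = iterNmul x b := by
  induction b using limitRecOn with
  | zero => rw [lift_zero, iterNmul_zero, iterNmul_zero]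
  | add_one b ih => rw [lift_add_one, iterNmul_add_one, iterNmul_add_one, ih]
  | limit l hl ih =>
    have hsurj : Function.Surjective
        fun γ : Iio l ↦ (⟨lift.{w} γ.1, lift_lt.2 γ.2⟩ : Iio (lift l)) := by
      rintro ⟨γ, hγ⟩
      obtain ⟨γ, rfl⟩ := mem_range_lift_of_le hγ.le
      exact ⟨⟨γ, lift_lt.1 hγ⟩, rfl⟩
    -- both suprema range over the same set, so no boundedness (smallness) is needed
    rw [iterNmul_of_isSuccLimit x (isSuccLimit_lift.2 hl), iterNmul_of_isSuccLimit x hl,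
      ← hsurj.iSup_comp]
    exact iSup_congr fun γ ↦ ih γ.1 γ.2

theorem iterNmul_le_omega0_opow_omega0_opow_mul {x k : Ordinal.{u}} (hx : x ≤ ω ^ ω ^ k)
    (b : Ordinal.{u}) :
    iterNmul x b ≤ ω ^ (ω ^ k * b) := by
  induction b using limitRecOn with
  | zero => rw [iterNmul_zero, mul_zero, opow_zero]
  | add_one b ih =>
    calc iterNmul x (b + 1) = iterNmul x b ⨳ x := iterNmul_add_one x b
      _ ≤ ω ^ (ω ^ k * b) ⨳ ω ^ ω ^ k := nmul_le_nmul ih hx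
      _ ≤ ω ^ (ω ^ k * b ♯ ω ^ k) := omega0_opow_nmul_omega0_opow_le _ _
      _ = ω ^ (ω ^ k * (b + 1)) := by
          rw [omega0_opow_mul_nadd_omega0_opow (isPrincipal_nadd_omega0_opow k), succ_eq_add_one]
  | limit l hl ih =>
    rw [iterNmul_of_isSuccLimit x hl]
    have : Nonempty (Iio l) := ⟨⟨0, hl.bot_lt⟩⟩
    exact ciSup_le' fun γ ↦
      (ih γ.1 γ.2).trans (opow_le_opow_right omega0_pos (mul_le_mul_right γ.2.le _))

theorem iterNmul_opow_omega0_lt_omega0_opow_opow_opow {o α b : Ordinal.{u}} (ho : o ≠ 0)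
    (hα : α < ω ^ ω ^ ω ^ o) (hb : b < ω ^ ω ^ o) :
    iterNmul (α ^ ω) b < ω ^ ω ^ ω ^ o := by
  have hlim : IsSuccLimit (ω ^ o) := isSuccLimit_opow_left isSuccLimit_omega0 ho
  obtain ⟨e, he, hαe⟩ := (lt_opow_of_isSuccLimit omega0_ne_zero
    (isSuccLimit_opow_left isSuccLimit_omega0 (opow_ne_zero o omega0_ne_zero))).1 hα
  obtain ⟨k, hk, hek⟩ := (lt_opow_of_isSuccLimit omega0_ne_zero hlim).1 he
  have hαω : α ^ ω ≤ ω ^ ω ^ succ k :=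
    calc α ^ ω ≤ (ω ^ ω ^ k) ^ ω :=
          opow_le_opow_left ω (hαe.trans ((opow_lt_opow_iff_right one_lt_omega0).2 hek)).le
      _ = ω ^ ω ^ succ k := by rw [← opow_mul, ← opow_succ]
  calc iterNmul (α ^ ω) b ≤ ω ^ (ω ^ succ k * b) :=
        iterNmul_le_omega0_opow_omega0_opow_mul hαω b
    _ < ω ^ ω ^ ω ^ o := (opow_lt_opow_iff_right one_lt_omega0).2 <|
        isPrincipal_mul_omega0_opow_opow o
          ((opow_lt_opow_iff_right one_lt_omega0).2 (hlim.succ_lt hk)) hb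

theorem lift_omega0_opow (a : Ordinal.{v}) : lift.{w} (ω ^ a) = ω ^ lift.{w} a := by
  induction a using limitRecOn with
  | zero => simp
  | add_one a ih => rw [opow_add_one, lift_mul, ih, lift_omega0, lift_add_one, opow_add_one]
  | limit l hl ih =>
    refine le_antisymm (le_of_forall_lt fun z hz ↦ ?_)
      ((opow_le_of_isSuccLimit omega0_ne_zero (isSuccLimit_lift.2 hl)).2 fun b hb ↦ ?_)
    · obtain ⟨z, rfl⟩ := mem_range_lift_of_le hz.le
      obtain ⟨a, ha, hz⟩ := (lt_opow_of_isSuccLimit omega0_ne_zero hl).1 (lift_lt.1 hz)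
      calc lift z < lift (ω ^ a) := lift_lt.2 hz
        _ = ω ^ lift a := ih a ha
        _ ≤ ω ^ lift l := opow_le_opow_right omega0_pos (lift_le.2 ha.le)
    · obtain ⟨a, rfl⟩ := mem_range_lift_of_le hb.le
      rw [← ih a (lift_lt.1 hb)]
      exact lift_le.2 (opow_le_opow_right omega0_pos (lift_lt.1 hb).le)

theorem lift_omegaTower (n : ℕ) : lift.{w} (omegaTower.{v} n) = omegaTower.{max v w} n := by
  induction n with
  | zero => exact lift_one
  | succ n ih => exact (lift_omega0_opow _).trans (congrArg _ ih)

theorem exists_lift_eq_of_lt_omegaTower {n : ℕ} {β : Ordinal.{v}} (hβ : β < omegaTower n) :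
    ∃ b : Ordinal.{u}, lift.{v} b = lift.{u} β ∧ b < omegaTower n := by
  have hβ' : lift.{u} β < lift.{v} (omegaTower.{u} n) := by
    simpa only [lift_omegaTower] using lift_lt.{u}.2 hβ
  obtain ⟨b, hb⟩ := mem_range_lift_of_le hβ'.le
  exact ⟨b, hb, lift_lt.1 (hb.trans_lt hβ')⟩

theorem omegaTower_ne_zero : ∀ n, omegaTower n ≠ 0
  | 0 => one_ne_zero
  | _ + 1 => opow_ne_zero _ omega0_ne_zero

/-- Let `2 ≤ n`. If `α < ω_{n+1}` and `β < ω_n`, then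
`(α^ω)^{⊙β} < ω_{n+1}`. -/
theorem iterNmul_opow_omega_lt (n : ℕ) (hn : 2 ≤ n) (α β : Ordinal)
    (hα : α < omegaTower (n + 1)) (hβ : β < omegaTower n) :
    iterNmul (α ^ Ordinal.omega0) β < omegaTower (n + 1) := by
  obtain ⟨m, rfl⟩ := Nat.exists_eq_add_of_le' hn
  -- `β` lives in its own universe: replace it by a copy `b` in the universe of `α`
  obtain ⟨b, hb, hbT⟩ := exists_lift_eq_of_lt_omegaTower hβ
  rw [← iterNmul_lift _ β, ← hb, iterNmul_lift]
  exact iterNmul_opow_omega0_lt_omega0_opow_opow_opow (omegaTower_ne_zero m) hα hbT
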